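/- arXiv:1509.03383 — 2 statements merged into one kernel-verified Lean document; each statement's English description precedes it below -/
import Mathlib

section
/- The lattice RC(A^k) of right congruences on A^k, ordered by inclusion, is semimodular: it contains no sublattice a > b > c, a > d, c ∧ d = e, c ∨ d = a with d covering e. -/
/-- Words of length `k` over `A`. -/
abbrev Word (A : Type*) (k : ℕ) := {w : List A // w.length = k}

/-- The shift action of a letter: `u.a` is the suffix of length `k` of `u a`. -/
def act {A : Type*} (k : ℕ) (a : A) (u : Word A k) : Word A k :=
  ⟨(u.val ++ [a]).drop ((u.val ++ [a]).length - k), by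
    have h := u.2
    simp only [List.length_drop, List.length_append, List.length_cons,
      List.length_nil, h]
    omega⟩

/-- A right congruence on `A^k`. -/
def IsRC {A : Type*} (k : ℕ) (r : Word A k → Word A k → Prop) : Prop :=
  Equivalence r ∧ ∀ u v : Word A k, r u v → ∀ a : A, r (act k a u) (act k a v)

/-- Containment of relations. -/
def Rle {A : Type*} {k : ℕ} (r r' : Word A k → Word A k → Prop) : Prop :=
  ∀ u v : Word A k, r u v → r' u v

/-- The join of two right congruences in `RC(A^k)`: the smallest right congruence
containing both. -/
def RCjoin {A : Type*} (k : ℕ) (σ τ : Word A k → Word A k → Prop)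
    (u v : Word A k) : Prop :=
  ∀ μ : Word A k → Word A k → Prop, IsRC k μ → Rle σ μ → Rle τ μ → μ u v

/-!
If `τ` covers `λ`, pick `(x, y) ∈ τ \ λ`. Since a word of length `k` sends all of `A^k` to a
single point, shifting `(x, y)` letter by letter eventually leaves `τ \ λ`, so we may assume that
every one-letter shift of `(x, y)` lies in `λ`. Then fusing the `λ`-classes of `x` and `y` is a
right congruence strictly between `λ` and `τ`, hence equal to `τ`. Fusing the `σ`-classes of `x`
and `y` in the same way gives a right congruence above `σ` and `τ`, hence above `ρ ⊇ σ'`. A pair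
in `σ' \ σ` then forces `x σ' y`, so `(x, y) ∈ σ' ∩ τ = λ`, a contradiction.
-/

section Words

variable {A : Type*} {k : ℕ}

def actList (k : ℕ) : List A → Word A k → Word A k
  | [], u => u
  | a :: w, u => actList k w (act k a u)

theorem act_val (a : A) (u : Word A k) : (act k a u).val = (u.val ++ [a]).drop 1 := by
  simp [act, u.2]

theorem actList_val (w : List A) (u : Word A k) :
    (actList k w u).val = (u.val ++ w).drop w.length := by
  induction w generalizing u with
  | nil => simp [actList]
  | cons a t ih =>
    rw [actList, ih, act_val, ← List.drop_append_of_le_length (by simp), List.drop_drop,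
      List.append_assoc, List.singleton_append, List.length_cons, Nat.add_comm]

theorem actList_eq_of_le_length (w : List A) (hw : k ≤ w.length) (u v : Word A k) :
    actList k w u = actList k w v := by
  have suffix : ∀ l : List A, l.length = k →
      (l ++ w).drop w.length = w.drop (w.length - k) := fun l hl => by
    rw [show w.length = l.length + (w.length - k) by omega, List.drop_append,
      List.drop_of_length_le (by omega), List.nil_append, hl, Nat.add_sub_cancel_left]
  exact Subtype.ext <| by rw [actList_val, actList_val, suffix u.val u.2, suffix v.val v.2]

end Words

section Relations

variable {A : Type*} {k : ℕ} {r r' β γ : Word A k → Word A k → Prop}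

theorem exists_rel_not_rel_of_rle_of_ne (hle : Rle r r') (hne : r ≠ r') :
    ∃ u v, r' u v ∧ ¬ r u v := by
  by_contra! h
  exact hne <| funext fun u => funext fun v => propext ⟨hle u v, h u v⟩

theorem exists_rel_not_rel_forall_act_rel (hr' : IsRC k r') (hr : ∀ u, r u u) {x y : Word A k}
    (hxy : r' x y) (hnxy : ¬ r x y) :
    ∃ x' y', r' x' y' ∧ ¬ r x' y' ∧ ∀ a : A, r (act k a x') (act k a y') := by
  suffices descend : ∀ n (x y : Word A k), r' x y → ¬ r x y →
      (∀ w : List A, n ≤ w.length → actList k w x = actList k w y) →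
      ∃ x' y', r' x' y' ∧ ¬ r x' y' ∧ ∀ a : A, r (act k a x') (act k a y') from
    descend k x y hxy hnxy fun w hw => actList_eq_of_le_length w hw x y
  intro n
  induction n with
  | zero =>
    intro x y _ hnxy hsync
    have hxy : x = y := hsync [] le_rfl
    exact absurd (hxy ▸ hr x) hnxy
  | succ n ih =>
    intro x y hxy hnxy hsync
    by_cases hact : ∀ a : A, r (act k a x) (act k a y)
    · exact ⟨x, y, hxy, hnxy, hact⟩
    · obtain ⟨a, ha⟩ := not_forall.1 hact
      exact ih _ _ (hr'.2 x y hxy a) ha fun w hw => hsync (a :: w) (by simpa using hw)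

/-- For an equivalence `β`, the equivalence obtained by fusing the classes of `x` and `y`. -/
def fuseClasses (β : Word A k → Word A k → Prop) (x y u v : Word A k) : Prop :=
  β u v ∨ ((β u x ∨ β u y) ∧ (β v x ∨ β v y))

theorem rle_fuseClasses (x y : Word A k) : Rle β (fuseClasses β x y) :=
  fun _ _ => Or.inl

theorem fuseClasses_self (hβ : ∀ u, β u u) (x y : Word A k) : fuseClasses β x y x y :=
  Or.inr ⟨Or.inl (hβ x), Or.inr (hβ y)⟩

theorem fuseClasses_mono (hle : Rle β γ) (x y : Word A k) :
    Rle (fuseClasses β x y) (fuseClasses γ x y) := by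
  rintro u v (h | ⟨hu, hv⟩)
  · exact Or.inl (hle u v h)
  · exact Or.inr ⟨hu.imp (hle u x) (hle u y), hv.imp (hle v x) (hle v y)⟩

theorem fuseClasses_rle (hγ : Equivalence γ) (hle : Rle β γ) {x y : Word A k} (hxy : γ x y) :
    Rle (fuseClasses β x y) γ := by
  have near : ∀ u, β u x ∨ β u y → γ u x := by
    rintro u (h | h)
    · exact hle u x h
    · exact hγ.trans (hle u y h) (hγ.symm hxy)
  rintro u v (h | ⟨hu, hv⟩)
  · exact hle u v h
  · exact hγ.trans (near u hu) (hγ.symm (near v hv))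

theorem IsRC.fuseClasses (hβ : IsRC k β) {x y : Word A k}
    (hact : ∀ a : A, β (act k a x) (act k a y)) : IsRC k (fuseClasses β x y) := by
  obtain ⟨E, C⟩ := hβ
  have near_trans : ∀ {u v}, β u v → (β v x ∨ β v y) → (β u x ∨ β u y) :=
    fun huv => Or.imp (E.trans huv) (E.trans huv)
  refine ⟨⟨fun u => Or.inl (E.refl u), ?_, ?_⟩, ?_⟩
  · rintro u v (h | ⟨hu, hv⟩)
    exacts [Or.inl (E.symm h), Or.inr ⟨hv, hu⟩]
  · rintro u v w (huv | ⟨hu, hv⟩) (hvw | ⟨hv', hw⟩)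
    · exact Or.inl (E.trans huv hvw)
    · exact Or.inr ⟨near_trans huv hv', hw⟩
    · exact Or.inr ⟨hu, near_trans (E.symm hvw) hv⟩
    · exact Or.inr ⟨hu, hw⟩
  · -- after one shift `x` and `y` are already `β`-related, so both fused classes land in one
    have shift_near : ∀ u, (β u x ∨ β u y) → ∀ a, β (act k a u) (act k a x) := by
      rintro u (h | h) a
      · exact C u x h a
      · exact E.trans (C u y h a) (E.symm (hact a))
    rintro u v (h | ⟨hu, hv⟩) a
    · exact Or.inl (C u v h a)
    · exact Or.inl (E.trans (shift_near u hu a) (E.symm (shift_near v hv a)))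

theorem rel_of_fuseClasses_of_not_rel (hβ : Equivalence β) (hγ : Equivalence γ) (hle : Rle β γ)
    {x y p q : Word A k} (hfuse : fuseClasses β x y p q) (hnpq : ¬ β p q) (hpq : γ p q) :
    γ x y := by
  rcases hfuse with h | ⟨hp | hp, hq | hq⟩
  · exact absurd h hnpq
  · exact absurd (hβ.trans hp (hβ.symm hq)) hnpq
  · exact hγ.trans (hγ.trans (hγ.symm (hle p x hp)) hpq) (hle q y hq)
  · exact hγ.symm (hγ.trans (hγ.trans (hγ.symm (hle p y hp)) hpq) (hle q x hq))
  · exact absurd (hβ.trans hp (hβ.symm hq)) hnpq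

end Relations

theorem RC_semimodular_general {A : Type*} (k : ℕ) :
    ¬ ∃ ρ σ σ' τ lam : Word A k → Word A k → Prop,
      IsRC k ρ ∧ IsRC k σ ∧ IsRC k σ' ∧ IsRC k τ ∧ IsRC k lam ∧
      Rle lam σ ∧ lam ≠ σ ∧
      Rle σ σ' ∧ σ ≠ σ' ∧
      Rle σ' ρ ∧ σ' ≠ ρ ∧
      Rle lam τ ∧ lam ≠ τ ∧
      Rle τ ρ ∧ τ ≠ ρ ∧
      (∀ u v : Word A k, (σ' u v ∧ τ u v) ↔ lam u v) ∧
      (∀ u v : Word A k, RCjoin k σ τ u v ↔ ρ u v) ∧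
      (∀ μ : Word A k → Word A k → Prop, IsRC k μ → Rle lam μ → Rle μ τ →
        μ = lam ∨ μ = τ) := by
  rintro ⟨ρ, σ, σ', τ, lam, -, hσ, hσ', hτ, hlam, hlamσ, -, hσσ', hσσ'_ne, hσ'ρ, -,
    hlamτ, hlamτ_ne, -, -, hmeet, hjoin, hcover⟩
  obtain ⟨x₀, y₀, hτ₀, hlam₀⟩ := exists_rel_not_rel_of_rle_of_ne hlamτ hlamτ_ne
  obtain ⟨x, y, hτxy, hlamxy, hact⟩ :=
    exists_rel_not_rel_forall_act_rel hτ hlam.1.refl hτ₀ hlam₀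
  have hfuse_lam : fuseClasses lam x y = τ :=
    (hcover _ (hlam.fuseClasses hact) (rle_fuseClasses x y)
      (fuseClasses_rle hτ.1 hlamτ hτxy)).resolve_left
      fun h => hlamxy (h ▸ fuseClasses_self hlam.1.refl x y)
  have hτ_fuse_σ : Rle τ (fuseClasses σ x y) := hfuse_lam ▸ fuseClasses_mono hlamσ x y
  obtain ⟨p, q, hσ'pq, hσpq⟩ := exists_rel_not_rel_of_rle_of_ne hσσ' hσσ'_ne
  have hfuse_pq : fuseClasses σ x y p q :=
    (hjoin p q).2 (hσ'ρ p q hσ'pq) _ (hσ.fuseClasses fun a => hlamσ _ _ (hact a))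
      (rle_fuseClasses x y) hτ_fuse_σ
  exact hlamxy <| (hmeet x y).1
    ⟨rel_of_fuseClasses_of_not_rel hσ.1 hσ'.1 hσσ' hfuse_pq hσpq hσ'pq, hτxy⟩

/-- the lattice `RC(A^k)` is semimodular: it contains no sublattice
`ρ > σ' > σ > λ`, `ρ > τ > λ` with `σ' ∧ τ = λ`, `σ ∨ τ = ρ` and `τ` covering `λ`. -/
theorem RC_semimodular {A : Type*} [Fintype A] [Nonempty A] (k : ℕ) (hk : 1 ≤ k) :
    ¬ ∃ ρ σ σ' τ lam : Word A k → Word A k → Prop,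
      IsRC k ρ ∧ IsRC k σ ∧ IsRC k σ' ∧ IsRC k τ ∧ IsRC k lam ∧
      Rle lam σ ∧ lam ≠ σ ∧
      Rle σ σ' ∧ σ ≠ σ' ∧
      Rle σ' ρ ∧ σ' ≠ ρ ∧
      Rle lam τ ∧ lam ≠ τ ∧
      Rle τ ρ ∧ τ ≠ ρ ∧
      (∀ u v : Word A k, (σ' u v ∧ τ u v) ↔ lam u v) ∧
      (∀ u v : Word A k, RCjoin k σ τ u v ↔ ρ u v) ∧
      (∀ μ : Word A k → Word A k → Prop, IsRC k μ → Rle lam μ → Rle μ τ →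
        μ = lam ∨ μ = τ) :=
  RC_semimodular_general k
end

section
/- Let ρ be a right congruence on A^k with |A| > 1, let ρ̲ be the largest special right congruence contained in ρ, and let S = Λ_{ρ̲} be its associated semaphore code. Then for 1 ≤ ℓ ≤ k, a word w of length ℓ is a reset on A^k/ρ if and only if w has a suffix in S; consequently, under a Bernoulli distribution π on A, the probability that a uniformly-π-random word of length ℓ is a reset equals ∑_{s ∈ S, |s| ≤ ℓ} π(s). -/
/-- The relation `τ_I` on `A^k`: a common suffix in `I`. -/
def tauW {A : Type*} (k : ℕ) (I : Set (List A)) (u v : Word A k) : Prop :=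
  ∃ w ∈ I, w <:+ u.val ∧ w <:+ v.val

/-- `w` is the longest common suffix of the `ρ`-class of `u`. -/
def IsLcsClass {A : Type*} {k : ℕ} (ρ : Word A k → Word A k → Prop)
    (u : Word A k) (w : List A) : Prop :=
  (∀ v : Word A k, ρ u v → w <:+ v.val) ∧
    ∀ w' : List A, (∀ v : Word A k, ρ u v → w' <:+ v.val) → w' <:+ w

/-- `Λ_ρ = { lcs(C) : C ∈ A^k/ρ }`. -/
def Lam {A : Type*} {k : ℕ} (ρ : Word A k → Word A k → Prop) : Set (List A) :=
  {w | ∃ u : Word A k, IsLcsClass ρ u w}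

/-- `Res(ρ)`: words `w` such that all `u, v ∈ A^k` having suffix `w` are
`ρ`-equivalent. -/
def ResSuf {A : Type*} (k : ℕ) (ρ : Word A k → Word A k → Prop) : Set (List A) :=
  {w | ∀ u v : Word A k, w <:+ u.val → w <:+ v.val → ρ u v}

/-- The multiplicative extension of a probability distribution on letters to words. -/
def piW {A : Type*} (π : A → ℝ) (w : List A) : ℝ := (w.map π).prod

/-! ### Auxiliary lemmas -/

section Aux

variable {A : Type*}

lemma suffix_cancel_right {q r s : List A} (h : q ++ s <:+ r ++ s) : q <:+ r := by
  obtain ⟨p, hp⟩ := h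
  rw [← List.append_assoc] at hp
  exact ⟨p, List.append_cancel_right hp⟩

lemma suffix_of_suffix_length_le {x y l : List A} (hx : x <:+ l) (hy : y <:+ l)
    (h : x.length ≤ y.length) : x <:+ y := by
  rcases List.suffix_or_suffix_of_suffix hx hy with h' | h'
  · exact h'
  · have : y = x := h'.eq_of_length (le_antisymm h'.length_le h)
    exact this ▸ List.suffix_rfl

lemma suffix_tail_of_proper {t w : List A} (h : t <:+ w) (hne : t ≠ w) :
    t <:+ w.tail := by
  obtain ⟨p, hp⟩ := h
  cases p with
  | nil => exact absurd hp hne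
  | cons a p' => exact ⟨p', by rw [← hp]; rfl⟩

/-- `ResSuf` is closed under extending words on the left. -/
lemma res_up {k : ℕ} {ρ : Word A k → Word A k → Prop} {v w : List A}
    (hv : v ∈ ResSuf k ρ) (h : v <:+ w) : w ∈ ResSuf k ρ :=
  fun u1 u2 h1 h2 => hv u1 u2 (h.trans h1) (h.trans h2)

/-- Every word of length at least `k` is in `ResSuf`. -/
lemma res_of_len {k : ℕ} {ρ : Word A k → Word A k → Prop} (hρ : Equivalence ρ)
    {w : List A} (hw : k ≤ w.length) : w ∈ ResSuf k ρ := by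
  intro u v hu hv
  have hu' : w = u.val := hu.eq_of_length (le_antisymm hu.length_le (by rw [u.2]; exact hw))
  have hv' : w = v.val := hv.eq_of_length (le_antisymm hv.length_le (by rw [v.2]; exact hw))
  have : u = v := Subtype.ext (hu' ▸ hv')
  exact this ▸ hρ.refl u

/-- Every word in `ResSuf` has a minimal suffix in `ResSuf`. -/
lemma exists_min_suffix {k : ℕ} {ρ : Word A k → Word A k → Prop} :
    ∀ w : List A, w ∈ ResSuf k ρ →
      ∃ s, s <:+ w ∧ s ∈ ResSuf k ρ ∧ ∀ t, t <:+ s → t ≠ s → t ∉ ResSuf k ρ := by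
  intro w
  induction w with
  | nil =>
    intro hw
    refine ⟨[], List.suffix_rfl, hw, fun t ht hne => absurd (List.suffix_nil.mp ht) hne⟩
  | cons a w ih =>
    intro hw
    by_cases h : w ∈ ResSuf k ρ
    · obtain ⟨s, hs1, hs2, hs3⟩ := ih h
      exact ⟨s, hs1.trans (List.suffix_cons a w), hs2, hs3⟩
    · refine ⟨a :: w, List.suffix_rfl, hw, fun t ht hne htR => ?_⟩
      have : t <:+ w := suffix_tail_of_proper ht hne
      exact h (res_up htR this)

/-- Characterization of the longest common suffix of a `τ_{Res(ρ)}`-class. -/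
lemma lcs_iff {k : ℕ} {ρ : Word A k → Word A k → Prop} (hρ : Equivalence ρ)
    (hab : ∃ a b : A, a ≠ b) (u : Word A k) (s : List A) :
    IsLcsClass (tauW k (ResSuf k ρ)) u s ↔
      (s <:+ u.val ∧ s ∈ ResSuf k ρ ∧
        ∀ t, t <:+ s → t ≠ s → t ∉ ResSuf k ρ) := by
  obtain ⟨a, b, hne⟩ := hab
  have back : ∀ s : List A, (s <:+ u.val ∧ s ∈ ResSuf k ρ ∧
      ∀ t, t <:+ s → t ≠ s → t ∉ ResSuf k ρ) →
      IsLcsClass (tauW k (ResSuf k ρ)) u s := by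
    rintro s ⟨hsu, hsR, hmin⟩
    have hslen : s.length ≤ k := by
      have := hsu.length_le; rw [u.2] at this; exact this
    constructor
    · rintro v ⟨w, hwR, hwu, hwv⟩
      rcases List.suffix_or_suffix_of_suffix hwu hsu with h' | h'
      · rcases eq_or_ne w s with rfl | hwne
        · exact hwv
        · exact absurd hwR (hmin w h' hwne)
      · exact h'.trans hwv
    · intro w' hw'
      set m := k - s.length with hm
      have hv1 : (List.replicate m a ++ s).length = k := by
        simp [List.length_append, List.length_replicate]; omega
      have hv2 : (List.replicate m b ++ s).length = k := by
        simp [List.length_append, List.length_replicate]; omega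
      set v1 : Word A k := ⟨List.replicate m a ++ s, hv1⟩
      set v2 : Word A k := ⟨List.replicate m b ++ s, hv2⟩
      have h1 : w' <:+ v1.val := hw' v1 ⟨s, hsR, hsu, List.suffix_append _ _⟩
      have h2 : w' <:+ v2.val := hw' v2 ⟨s, hsR, hsu, List.suffix_append _ _⟩
      have hs1 : s <:+ v1.val := List.suffix_append _ _
      rcases List.suffix_or_suffix_of_suffix h1 hs1 with h' | h'
      · exact h'
      · obtain ⟨q, hq⟩ := h'
        cases q with
        | nil => simpa using hq ▸ List.suffix_rfl
        | cons c q' =>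
          exfalso
          have hq1 : (c :: q') ++ s <:+ List.replicate m a ++ s := hq ▸ h1
          have hq2 : (c :: q') ++ s <:+ List.replicate m b ++ s := hq ▸ h2
          have hc1 : c ∈ List.replicate m a :=
            (suffix_cancel_right hq1).sublist.subset List.mem_cons_self
          have hc2 : c ∈ List.replicate m b :=
            (suffix_cancel_right hq2).sublist.subset List.mem_cons_self
          exact hne ((List.mem_replicate.mp hc1).2 ▸ (List.mem_replicate.mp hc2).2 ▸ rfl)
  constructor
  · intro h
    obtain ⟨s0, h1, h2, h3⟩ := exists_min_suffix u.val (res_of_len hρ (le_of_eq u.2.symm))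
    have h0 : IsLcsClass (tauW k (ResSuf k ρ)) u s0 := back s0 ⟨h1, h2, h3⟩
    have e1 : s <:+ s0 := h0.2 s h.1
    have e2 : s0 <:+ s := h.2 s0 h0.1
    have : s = s0 := e1.eq_of_length (le_antisymm e1.length_le e2.length_le)
    exact this ▸ ⟨h1, h2, h3⟩
  · exact back s

/-- Characterization of the semaphore code `Λ_{τ_{Res(ρ)}}`. -/
lemma lam_iff {k : ℕ} {ρ : Word A k → Word A k → Prop} (hρ : Equivalence ρ)
    (hab : ∃ a b : A, a ≠ b) (s : List A) :
    s ∈ Lam (tauW k (ResSuf k ρ)) ↔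
      (s.length ≤ k ∧ s ∈ ResSuf k ρ ∧
        ∀ t, t <:+ s → t ≠ s → t ∉ ResSuf k ρ) := by
  constructor
  · rintro ⟨u, hu⟩
    obtain ⟨h1, h2, h3⟩ := (lcs_iff hρ hab u s).mp hu
    exact ⟨by have := h1.length_le; rw [u.2] at this; exact this, h2, h3⟩
  · rintro ⟨h1, h2, h3⟩
    obtain ⟨a, _, _⟩ := id hab
    have hlen : (List.replicate (k - s.length) a ++ s).length = k := by
      simp [List.length_append, List.length_replicate]; omega
    exact ⟨⟨_, hlen⟩, (lcs_iff hρ hab _ s).mpr ⟨List.suffix_append _ _, h2, h3⟩⟩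

variable [Fintype A]

/-- The finset of all words of length `m`. -/
noncomputable def allW (A : Type*) [Fintype A] : ℕ → Finset (List A)
  | 0 => {[]}
  | (m + 1) =>
    letI := Classical.decEq (List A)
    ((Finset.univ : Finset A) ×ˢ allW A m).image (fun p => p.1 :: p.2)

lemma mem_allW {m : ℕ} {l : List A} : l ∈ allW A m ↔ l.length = m := by
  induction m generalizing l with
  | zero => simp [allW, List.length_eq_zero_iff]
  | succ m ih =>
    simp only [allW, Finset.mem_image, Finset.mem_product, Finset.mem_univ, true_and]
    constructor
    · rintro ⟨⟨a, t⟩, ht, rfl⟩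
      simp [ih.mp (by simpa using ht)]
    · intro hl
      cases l with
      | nil => simp at hl
      | cons a t => exact ⟨(a, t), by simpa using ih.mpr (by simpa using hl), rfl⟩

lemma piW_append (π : A → ℝ) (p s : List A) : piW π (p ++ s) = piW π p * piW π s := by
  simp [piW]

lemma sum_allW (π : A → ℝ) (hsum : ∑ a : A, π a = 1) (m : ℕ) :
    ∑ l ∈ allW A m, piW π l = 1 := by
  induction m with
  | zero => simp [allW, piW]
  | succ m ih =>
    letI := Classical.decEq (List A)
    rw [show (allW A (m + 1)) =
      ((Finset.univ : Finset A) ×ˢ allW A m).image (fun p => p.1 :: p.2) from rfl]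
    rw [Finset.sum_image (by rintro ⟨a, t⟩ _ ⟨a', t'⟩ _ h; simpa using h)]
    rw [Finset.sum_product]
    have : ∀ (a : A) (t : List A), piW π (a :: t) = π a * piW π t := by
      intro a t; simp [piW]
    simp_rw [this]
    rw [← Finset.sum_mul_sum, hsum, ih, one_mul]

end Aux

/-- let `ρ` be a right congruence on `A^k` with `|A| > 1`, let
`ρ̲ = τ_{Res(ρ)}` be the largest special right congruence contained in `ρ`, and let
`S = Λ_{ρ̲}` be its semaphore code.  Then a word `w` with `1 ≤ |w| ≤ k` is a reset
on `A^k/ρ` iff it has a suffix in `S`; consequently, for a Bernoulli distribution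
`π` on `A`, the probability that a random word of length `ℓ` is a reset equals
`∑_{s ∈ S, |s| ≤ ℓ} π(s)`. -/
theorem reset_probability {A : Type*} [Fintype A] (hA : 1 < Fintype.card A)
    (k : ℕ) (hk : 1 ≤ k) (ρ : Word A k → Word A k → Prop) (hρ : IsRC k ρ)
    (π : A → ℝ) (hpos : ∀ a : A, 0 ≤ π a) (hsum : ∑ a : A, π a = 1) :
    (∀ w : List A, 1 ≤ w.length → w.length ≤ k →
      (w ∈ ResSuf k ρ ↔ ∃ s ∈ Lam (tauW k (ResSuf k ρ)), s <:+ w)) ∧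
    (∀ ℓ : ℕ, 1 ≤ ℓ → ℓ ≤ k →
      (∑' w : {w : List A // w.length = ℓ ∧ w ∈ ResSuf k ρ}, piW π w.val)
        = ∑' s : {s : List A // s ∈ Lam (tauW k (ResSuf k ρ)) ∧ s.length ≤ ℓ},
            piW π s.val) := by
  classical
  have hab : ∃ a b : A, a ≠ b := Fintype.exists_pair_of_one_lt_card hA
  have hEq : Equivalence ρ := hρ.1
  set R := ResSuf k ρ with hR
  set S := Lam (tauW k R) with hS
  -- Part 1
  have part1 : ∀ w : List A, w.length ≤ k →
      (w ∈ R ↔ ∃ s ∈ S, s <:+ w) := by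
    intro w hwk
    constructor
    · intro hw
      obtain ⟨s, hs1, hs2, hs3⟩ := exists_min_suffix w hw
      exact ⟨s, (lam_iff hEq hab s).mpr ⟨le_trans hs1.length_le hwk, hs2, hs3⟩, hs1⟩
    · rintro ⟨s, hsS, hsw⟩
      exact res_up ((lam_iff hEq hab s).mp hsS).2.1 hsw
  refine ⟨fun w _ hwk => part1 w hwk, ?_⟩
  -- Part 2
  intro ℓ hℓ1 hℓk
  -- the finsets
  set FS : Finset (List A) :=
    ((Finset.range (ℓ + 1)).biUnion (allW A)).filter (fun s => s ∈ S ∧ s.length ≤ ℓ)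
    with hFS
  set FW : Finset (List A) := (allW A ℓ).filter (fun w => w ∈ R) with hFW
  have memFS : ∀ s : List A, s ∈ FS ↔ (s ∈ S ∧ s.length ≤ ℓ) := by
    intro s
    rw [hFS, Finset.mem_filter]
    constructor
    · exact fun h => h.2
    · intro h
      refine ⟨Finset.mem_biUnion.mpr ⟨s.length, ?_, mem_allW.mpr rfl⟩, h⟩
      simpa using Nat.lt_succ_of_le h.2
  have memFW : ∀ w : List A, w ∈ FW ↔ (w.length = ℓ ∧ w ∈ R) := by
    intro w
    rw [hFW, Finset.mem_filter, mem_allW]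
  -- the fibers
  set Ext : List A → Finset (List A) :=
    fun s => (allW A (ℓ - s.length)).image (fun p => p ++ s) with hExt
  -- FW is the disjoint union of the fibers
  have cover : FW = FS.biUnion Ext := by
    ext w
    rw [memFW, Finset.mem_biUnion]
    constructor
    · rintro ⟨hwl, hwR⟩
      obtain ⟨s, hs1, hs2, hs3⟩ := exists_min_suffix w hwR
      have hsl : s.length ≤ ℓ := hwl ▸ hs1.length_le
      have hsS : s ∈ S := (lam_iff hEq hab s).mpr ⟨le_trans hsl hℓk, hs2, hs3⟩
      obtain ⟨p, hp⟩ := hs1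
      refine ⟨s, (memFS s).mpr ⟨hsS, hsl⟩, Finset.mem_image.mpr ⟨p, mem_allW.mpr ?_, hp⟩⟩
      have := congrArg List.length hp
      simp [List.length_append] at this
      omega
    · rintro ⟨s, hsFS, hw⟩
      obtain ⟨hsS, hsl⟩ := (memFS s).mp hsFS
      obtain ⟨p, hp, rfl⟩ := Finset.mem_image.mp hw
      have hpl : p.length = ℓ - s.length := mem_allW.mp hp
      constructor
      · simp [List.length_append, hpl]; omega
      · exact res_up ((lam_iff hEq hab s).mp hsS).2.1 (List.suffix_append _ _)
  have disj : (↑FS : Set (List A)).PairwiseDisjoint Ext := by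
    intro s hsFS s' hs'FS hne
    refine Finset.disjoint_left.mpr ?_
    intro w hw hw'
    obtain ⟨hsS, _⟩ := (memFS s).mp (by simpa using hsFS)
    obtain ⟨hs'S, _⟩ := (memFS s').mp (by simpa using hs'FS)
    obtain ⟨-, hsR, hsmin⟩ := (lam_iff hEq hab s).mp hsS
    obtain ⟨-, hs'R, hs'min⟩ := (lam_iff hEq hab s').mp hs'S
    obtain ⟨p, _, rfl⟩ := Finset.mem_image.mp hw
    obtain ⟨p', hp', he⟩ := Finset.mem_image.mp hw'
    have h1 : s <:+ p ++ s := List.suffix_append _ _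
    have h2 : s' <:+ p ++ s := he ▸ List.suffix_append p' s'
    rcases List.suffix_or_suffix_of_suffix h1 h2 with h' | h'
    · exact hs'min s h' hne hsR
    · exact hsmin s' h' (Ne.symm hne) hs'R
  -- fiber sums
  have fiber_sum : ∀ s ∈ FS, ∑ w ∈ Ext s, piW π w = piW π s := by
    intro s _
    rw [hExt]
    rw [Finset.sum_image (fun x _ y _ h => List.append_left_injective s h)]
    simp_rw [piW_append]
    rw [← Finset.sum_mul, sum_allW π hsum, one_mul]
  have key : ∑ w ∈ FW, piW π w = ∑ s ∈ FS, piW π s := by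
    rw [cover, Finset.sum_biUnion disj]
    exact Finset.sum_congr rfl fiber_sum
  -- convert tsums to finite sums
  have hfin1 : {w : List A | w.length = ℓ ∧ w ∈ R}.Finite :=
    (allW A ℓ).finite_toSet.subset (fun w hw => mem_allW.mpr hw.1)
  have hfin2 : {s : List A | s ∈ S ∧ s.length ≤ ℓ}.Finite :=
    (((Finset.range (ℓ + 1)).biUnion (allW A)) : Finset (List A)).finite_toSet.subset
      (fun s hs => Finset.mem_biUnion.mpr
        ⟨s.length, by simpa using Nat.lt_succ_of_le hs.2, mem_allW.mpr rfl⟩)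
  haveI F1 : Fintype {w : List A // w.length = ℓ ∧ w ∈ ResSuf k ρ} := hfin1.fintype
  haveI F2 : Fintype {s : List A // s ∈ Lam (tauW k (ResSuf k ρ)) ∧ s.length ≤ ℓ} :=
    hfin2.fintype
  rw [tsum_fintype, tsum_fintype,
    ← Finset.sum_subtype FW memFW (piW π),
    ← Finset.sum_subtype FS memFS (piW π)]
  exact key
end
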